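/- (Core identity of the hardness reduction for the drastic measure.) Let G be a finite set of size m₀ equipped with a symmetric conflict relation, let r ≥ 1, and let D = G ∪ {e₁,…,e_r} ∪ {f}, where e₁,…,e_r,f are pairwise distinct elements not in G. Extend the conflict relation to D by: C(e_i, e_j) for all i ≠ j; C(e_i, f) for all i; and no conflicts between any of e₁,…,e_r,f and any element of G. Then Shapley(D, I_d, f) = Σ_{k=0}^{m₀} M_k · r · (k+1)! · (m₀ − k + r − 1)! / (m₀ + r + 1)!, where M_k denotes the number of consistent k-element subsets of G. -/

import Mathlib

open scoped BigOperators Classical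

variable {α : Type*} [DecidableEq α]

/-- The Shapley value of `f` in the cooperative game `v` over the set of players `D`. -/
noncomputable def Shapley (D : Finset α) (v : Finset α → ℝ) (f : α) : ℝ :=
  ∑ B ∈ (D \ {f}).powerset,
    ((B.card.factorial * (D.card - B.card - 1).factorial : ℕ) : ℝ) / (D.card.factorial : ℝ) *
      (v (B ∪ {f}) - v B)

/-- A finite set `E` is consistent if it contains no two distinct conflicting elements. -/
def Consistent (C : α → α → Prop) (E : Finset α) : Prop :=
  ∀ g ∈ E, ∀ h ∈ E, g ≠ h → ¬ C g h

/-- The drastic inconsistency measure: `1` if the set is inconsistent, `0` otherwise. -/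
noncomputable def Idrastic (C : α → α → Prop) (E : Finset α) : ℝ :=
  if Consistent C E then 0 else 1

/-! Adding `f` to a coalition `B ⊆ G ∪ {e₁,…,e_r}` raises the drastic measure exactly when `B` is
consistent and contains some `eᵢ`. As the `eᵢ` conflict pairwise and with nothing in `G`, these
coalitions are the sets `A ∪ {eᵢ}` with `A ⊆ G` consistent, each arising from a unique pair
`(A, i)`. So there are `r · M_k` of them of size `k + 1`, each carrying the Shapley weight
`(k+1)! (m₀+r−k−1)! / (m₀+r+1)!`. -/

open Finset Nat

theorem Consistent.subset {β : Type*} {C : β → β → Prop} {E F : Finset β}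
    (hE : Consistent C E) (hFE : F ⊆ E) : Consistent C F :=
  fun g hg h hh => hE g (hFE hg) h (hFE hh)

theorem sum_powerset_filter_eq_sum_card_mul {ι β : Type*} [NonAssocSemiring β] (G : Finset ι)
    (p : Finset ι → Prop) [DecidablePred p] (w : ℕ → β) :
    ∑ A ∈ G.powerset with p A, w A.card =
      ∑ k ∈ range (G.card + 1), ((G.powersetCard k).filter p).card * w k := by
  rw [sum_filter, sum_powerset]
  refine sum_congr rfl fun k _ => ?_
  rw [← nsmul_eq_mul, ← sum_const, sum_filter]
  exact sum_congr rfl fun A hA => by rw [(mem_powersetCard.1 hA).2]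

section
variable {C : α → α → Prop}

theorem consistent_insert_iff (hsymm : Symmetric C) {B : Finset α} {f : α} :
    Consistent C (insert f B) ↔ Consistent C B ∧ ∀ g ∈ B, g ≠ f → ¬ C f g := by
  refine ⟨fun h => ⟨h.subset (subset_insert f B), fun g hg hne =>
    h f (mem_insert_self f B) g (mem_insert_of_mem hg) hne.symm⟩, ?_⟩
  rintro ⟨hB, hf⟩ g hg h hh hne
  rw [mem_insert] at hg hh
  rcases hg with rfl | hg <;> rcases hh with rfl | hh
  · exact absurd rfl hne
  · exact hf h hh hne.symm
  · exact fun hC => hf g hg hne (hsymm hC)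
  · exact hB g hg h hh hne

theorem shapley_union_singleton {S : Finset α} {f : α} (hf : f ∉ S) (v : Finset α → ℝ) :
    Shapley (S ∪ {f}) v f = ∑ B ∈ S.powerset,
      ((B.card ! * (S.card - B.card)! : ℕ) : ℝ) / ((S.card + 1)! : ℝ) * (v (B ∪ {f}) - v B) := by
  have hcard : (S ∪ {f}).card = S.card + 1 := by rw [union_singleton, card_insert_of_notMem hf]
  have hsdiff : (S ∪ {f}) \ {f} = S := by
    rw [union_sdiff_right, sdiff_singleton_eq_erase, erase_eq_of_notMem hf]
  simp only [Shapley, hcard, hsdiff, Nat.sub_right_comm _ _ 1, Nat.add_sub_cancel]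

theorem idrastic_union_singleton_sub (B : Finset α) (f : α) :
    Idrastic C (B ∪ {f}) - Idrastic C B =
      if Consistent C B ∧ ¬ Consistent C (B ∪ {f}) then 1 else 0 := by
  have hmono : Consistent C (B ∪ {f}) → Consistent C B := fun h => h.subset subset_union_left
  by_cases hB : Consistent C B <;> by_cases hBf : Consistent C (B ∪ {f}) <;>
    simp_all [Idrastic]

theorem shapley_idrastic_union_singleton {S : Finset α} {f : α} (hf : f ∉ S) :
    Shapley (S ∪ {f}) (Idrastic C) f =
      ∑ B ∈ S.powerset with Consistent C B ∧ ¬ Consistent C (B ∪ {f}),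
        ((B.card ! * (S.card - B.card)! : ℕ) : ℝ) / ((S.card + 1)! : ℝ) := by
  simp only [shapley_union_singleton hf, idrastic_union_singleton_sub, mul_ite, mul_one, mul_zero,
    sum_filter]

theorem consistent_union_singleton_iff_disjoint (hsymm : Symmetric C) {G E B : Finset α} {f : α}
    (hfE : f ∉ E) (hEf : ∀ x ∈ E, C x f) (hGf : ∀ g ∈ G, ¬ C f g) (hB : B ⊆ G ∪ E)
    (hBc : Consistent C B) :
    Consistent C (B ∪ {f}) ↔ Disjoint B E := by
  rw [union_singleton, consistent_insert_iff hsymm, and_iff_right hBc]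
  constructor
  · refine fun h => disjoint_left.2 fun x hxB hxE => ?_
    exact h x hxB (ne_of_mem_of_not_mem hxE hfE) (hsymm (hEf x hxE))
  · intro h g hgB _
    exact hGf g ((mem_union.1 (hB hgB)).resolve_right (disjoint_left.1 h hgB))

theorem injOn_insert_of_disjoint {G E : Finset α} (hGE : Disjoint G E) :
    Set.InjOn (fun p : Finset α × α => insert p.2 p.1) ↑(G.powerset ×ˢ E) := by
  rintro ⟨A, x⟩ hp ⟨A', y⟩ hq (hxy : insert x A = insert y A')
  simp only [coe_product, coe_powerset, Set.mem_prod, Set.mem_preimage, Set.mem_powerset_iff,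
    coe_subset, mem_coe] at hp hq
  have hxA : x ∉ A := fun h => disjoint_left.1 hGE (hp.1 h) hp.2
  have hyA' : y ∉ A' := fun h => disjoint_left.1 hGE (hq.1 h) hq.2
  have hxy' : x = y := by
    have hx : x ∈ insert y A' := hxy ▸ mem_insert_self x A
    exact (mem_insert.1 hx).resolve_right fun h => disjoint_left.1 hGE (hq.1 h) hp.2
  subst hxy'
  rw [← erase_insert hxA, hxy, erase_insert hyA']

theorem image_insert_consistent_product (hsymm : Symmetric C) {G E : Finset α}
    (hEE : ∀ x ∈ E, ∀ y ∈ E, x ≠ y → C x y) (hEG : ∀ x ∈ E, ∀ g ∈ G, ¬ C x g) :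
    ((G.powerset.filter (Consistent C)) ×ˢ E).image (fun p => insert p.2 p.1) =
      (G ∪ E).powerset.filter (fun B => Consistent C B ∧ ¬ Disjoint B E) := by
  ext B
  simp only [mem_image, mem_product, mem_filter, mem_powerset, Prod.exists]
  constructor
  · rintro ⟨A, x, ⟨⟨hAG, hA⟩, hx⟩, rfl⟩
    refine ⟨insert_subset (mem_union_right G hx) (hAG.trans subset_union_left),
      (consistent_insert_iff hsymm).2 ⟨hA, fun g hg _ => hEG x hx g (hAG hg)⟩,
      not_disjoint_iff.2 ⟨x, mem_insert_self x A, hx⟩⟩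
  · rintro ⟨hBGE, hB, hBE⟩
    obtain ⟨x, hxB, hxE⟩ := not_disjoint_iff.1 hBE
    -- every other element of `B` lies in `G`, since two elements of `E` conflict
    have hBG : B.erase x ⊆ G := fun y hy => by
      obtain ⟨hyx, hyB⟩ := mem_erase.1 hy
      exact (mem_union.1 (hBGE hyB)).resolve_right fun hyE =>
        hB y hyB x hxB hyx (hEE y hyE x hxE hyx)
    exact ⟨B.erase x, x, ⟨⟨hBG, hB.subset (erase_subset x B)⟩, hxE⟩, insert_erase hxB⟩

theorem shapley_idrastic_of_conflicting_clique (hsymm : Symmetric C) {G E : Finset α} {f : α}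
    (hGE : Disjoint G E) (hfG : f ∉ G) (hfE : f ∉ E)
    (hEE : ∀ x ∈ E, ∀ y ∈ E, x ≠ y → C x y) (hEf : ∀ x ∈ E, C x f)
    (hEG : ∀ x ∈ E, ∀ g ∈ G, ¬ C x g) (hGf : ∀ g ∈ G, ¬ C f g) :
    Shapley ((G ∪ E) ∪ {f}) (Idrastic C) f =
      ∑ k ∈ range (G.card + 1), (((G.powersetCard k).filter (Consistent C)).card : ℝ) *
        E.card * ((k + 1)! : ℝ) * ((G.card - k + E.card - 1)! : ℝ) /
          ((G.card + E.card + 1)! : ℝ) := by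
  set w : ℕ → ℝ := fun b =>
    ((b ! * (G.card + E.card - b)! : ℕ) : ℝ) / ((G.card + E.card + 1)! : ℝ)
  have hcard : (G ∪ E).card = G.card + E.card := card_union_of_disjoint hGE
  calc Shapley ((G ∪ E) ∪ {f}) (Idrastic C) f
      = ∑ B ∈ (G ∪ E).powerset with Consistent C B ∧ ¬ Disjoint B E, w B.card := by
        rw [shapley_idrastic_union_singleton (notMem_union.2 ⟨hfG, hfE⟩), hcard]
        refine sum_congr (filter_congr fun B hB => ?_) fun _ _ => rfl
        refine and_congr_right fun hBc => not_congr ?_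
        exact consistent_union_singleton_iff_disjoint hsymm hfE hEf hGf (mem_powerset.1 hB) hBc
    _ = ∑ p ∈ (G.powerset.filter (Consistent C)) ×ˢ E, w (p.1.card + 1) := by
        rw [← image_insert_consistent_product hsymm hEE hEG,
          sum_image ((injOn_insert_of_disjoint hGE).mono ?_)]
        · refine sum_congr rfl fun p hp => ?_
          obtain ⟨hA, hx⟩ := mem_product.1 hp
          have hAG : p.1 ⊆ G := mem_powerset.1 (mem_filter.1 hA).1
          rw [card_insert_of_notMem fun h => disjoint_left.1 hGE (hAG h) hx]
        · exact product_subset_product_left (filter_subset _ _)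
    _ = ∑ A ∈ G.powerset with Consistent C A, E.card * w (A.card + 1) := by
        simp only [sum_product, sum_const, nsmul_eq_mul]
    _ = _ := by
        rw [sum_powerset_filter_eq_sum_card_mul G (Consistent C) fun b => (E.card : ℝ) * w (b + 1)]
        refine sum_congr rfl fun k hk => ?_
        have hk : G.card + E.card - (k + 1) = G.card - k + E.card - 1 := by
          have := mem_range.1 hk
          omega
        simp only [w, hk]
        push_cast
        ring

end

theorem shapley_drastic_reduction_identity (C : α → α → Prop) (hsymm : Symmetric C)
    (G : Finset α) (r : ℕ) (e : Fin r → α) (f : α)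
    (he_inj : Function.Injective e)
    (heG : ∀ i, e i ∉ G) (hfG : f ∉ G) (hfe : ∀ i, f ≠ e i)
    (hee : ∀ i j, i ≠ j → C (e i) (e j))
    (hef : ∀ i, C (e i) f)
    (heg : ∀ i, ∀ g ∈ G, ¬ C (e i) g)
    (hfg : ∀ g ∈ G, ¬ C f g) :
    Shapley ((G ∪ Finset.image e Finset.univ) ∪ {f}) (Idrastic C) f =
      ∑ k ∈ Finset.range (G.card + 1),
        (((G.powersetCard k).filter (Consistent C)).card : ℝ) * (r : ℝ) *
          ((k + 1).factorial : ℝ) * ((G.card - k + r - 1).factorial : ℝ) /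
            ((G.card + r + 1).factorial : ℝ) := by
  have hcard : (image e univ).card = r := by
    rw [card_image_of_injective _ he_inj, Finset.card_univ, Fintype.card_fin]
  have key := shapley_idrastic_of_conflicting_clique (E := image e univ) hsymm
    (disjoint_right.2 (by simpa using heG))
    hfG (by simpa [eq_comm] using hfe)
    (by simpa using fun i j (hij : e i ≠ e j) => hee i j (ne_of_apply_ne e hij))
    (by simpa using hef) (by simpa using heg) hfg
  rwa [hcard] at key
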